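/- Let β ≥ γ ≥ 0 be real numbers with β + γ > 1, and let ε > 0. Define α = γ if β > 1, α = γ − ε if β = 1, and α = β + γ − 1 if β < 1. Then there exists a constant C = C(β, γ, ε) > 0 such that for all a₁, a₂ ∈ ℝ, ∫_ℝ ⟨x − a₁⟩^{−β} ⟨x − a₂⟩^{−γ} dx ≤ C ⟨a₁ − a₂⟩^{−α}. -/

import Mathlib

/-!
Write `d = a₁ - a₂` and shift so that the integrand is `⟨y⟩^{-β} ⟨y + d⟩^{-γ}`. Split the line into
the window `|y| ≤ |d|/2`, where `⟨y + d⟩ ≳ ⟨d⟩`, the window `|y + d| ≤ |d|/2`, where `⟨y⟩ ≳ ⟨d⟩`,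
and the rest, where `⟨y + d⟩ ≤ 3⟨y⟩` and the integrand is `≲ ⟨y + d⟩^{-(β+γ)}`. The window integrals
`∫_{|y| ≤ R} ⟨y⟩^{-τ}` grow like `⟨R⟩^{1-τ}` when `τ < 1` and like `⟨R⟩^s` for any `s ≥ 0` with
`τ + s > 1`, and the tail `∫_{|y| > R} ⟨y⟩^{-ρ}` decays like `⟨R⟩^{1-ρ}` when `ρ > 1`. With
`R = |d|/2` the three pieces are `≲ ⟨d⟩^{-α}` exactly when `α ≤ γ` and either `α < β + γ - 1`,
or `β < 1` and `α = β + γ - 1`; the three cases of the theorem are of this kind.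
-/

open MeasureTheory Real

/-- The Japanese bracket `⟨x⟩ = (1 + x²)^{1/2}`. -/
noncomputable def jpn (x : ℝ) : ℝ := Real.sqrt (1 + x ^ 2)

open Set

lemma rpow_neg_le_mul_rpow_neg {a b c r : ℝ} (ha : 0 < a) (hc : 0 < c) (hab : a ≤ c * b)
    (hr : 0 ≤ r) : b ^ (-r) ≤ c ^ r * a ^ (-r) :=
  calc b ^ (-r) ≤ (a / c) ^ (-r) :=
        rpow_le_rpow_of_nonpos (div_pos ha hc) ((div_le_iff₀' hc).2 hab) (neg_nonpos.2 hr)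
    _ = c ^ r * a ^ (-r) := by
        rw [div_rpow ha.le hc.le, rpow_neg hc.le, div_inv_eq_mul, mul_comm]

lemma integral_comp_sub_mul_comp_sub (f g : ℝ → ℝ) (a₁ a₂ : ℝ) :
    ∫ x, f (x - a₁) * g (x - a₂) = ∫ y, f y * g (y + (a₁ - a₂)) := by
  rw [← integral_sub_right_eq_self (fun y => f y * g (y + (a₁ - a₂))) a₁]
  simp only [sub_add_sub_cancel]

lemma setIntegral_preimage_abs {g : ℝ → ℝ} (hg : ∀ y, g |y| = g y) {s : Set ℝ}
    (hs : MeasurableSet s) : ∫ y in abs ⁻¹' s, g y = 2 * ∫ y in s ∩ Ioi 0, g y := by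
  have h : (abs ⁻¹' s).indicator g = fun y => s.indicator g |y| := by
    funext y
    by_cases hy : |y| ∈ s <;> simp [indicator, hy, hg]
  rw [← integral_indicator (measurable_abs hs), h, integral_comp_abs, integral_indicator hs,
    Measure.restrict_restrict hs]

lemma jpn_pos (x : ℝ) : 0 < jpn x := sqrt_pos.2 (by positivity)

lemma one_le_jpn (x : ℝ) : 1 ≤ jpn x := one_le_sqrt.2 (by nlinarith)

lemma abs_le_jpn (x : ℝ) : |x| ≤ jpn x := abs_le_sqrt (by linarith)

lemma jpn_le_one_add_abs (x : ℝ) : jpn x ≤ 1 + |x| :=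
  sqrt_le_iff.2 ⟨by positivity, by nlinarith [abs_nonneg x, sq_abs x]⟩

lemma jpn_abs (x : ℝ) : jpn |x| = jpn x := by rw [jpn, sq_abs, jpn]

lemma jpn_le_mul_of_abs_le_mul {c x y : ℝ} (hc : 1 ≤ c) (h : |x| ≤ c * |y|) :
    jpn x ≤ c * jpn y := by
  have hsq : x ^ 2 ≤ c ^ 2 * y ^ 2 := by
    rw [← sq_abs x, ← sq_abs y, ← mul_pow]; exact pow_le_pow_left₀ (abs_nonneg x) h 2
  rw [jpn, jpn, ← sqrt_sq (by linarith : 0 ≤ c), ← sqrt_mul (sq_nonneg c)]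
  exact sqrt_le_sqrt (by nlinarith)

lemma jpn_le_jpn {x y : ℝ} (h : |x| ≤ |y|) : jpn x ≤ jpn y := by
  simpa using jpn_le_mul_of_abs_le_mul le_rfl (by simpa using h)

lemma jpn_rpow_neg_le {c r x y : ℝ} (hc : 1 ≤ c) (h : |x| ≤ c * |y|) (hr : 0 ≤ r) :
    jpn y ^ (-r) ≤ c ^ r * jpn x ^ (-r) :=
  rpow_neg_le_mul_rpow_neg (jpn_pos x) (by linarith) (jpn_le_mul_of_abs_le_mul hc h) hr

lemma jpn_rpow_nonneg (x r : ℝ) : 0 ≤ jpn x ^ r := rpow_nonneg (jpn_pos x).le r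

lemma continuous_jpn_rpow (r : ℝ) : Continuous fun x => jpn x ^ r :=
  (continuous_const.add (continuous_pow 2)).sqrt.rpow_const fun x => Or.inl (jpn_pos x).ne'

lemma integrable_jpn_rpow_neg {ρ : ℝ} (hρ : 1 < ρ) : Integrable fun y => jpn y ^ (-ρ) := by
  refine (integrable_rpow_neg_one_add_norm_sq (E := ℝ) (μ := volume) (by simpa using hρ)).congr
    (Filter.Eventually.of_forall fun x => ?_)
  dsimp only
  rw [norm_eq_abs, sq_abs, jpn, sqrt_eq_rpow, ← rpow_mul (by positivity)]
  ring_nf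

lemma measurableSet_abs_le (R : ℝ) : MeasurableSet {y : ℝ | |y| ≤ R} :=
  measurable_abs measurableSet_Iic

lemma measurableSet_lt_abs (R : ℝ) : MeasurableSet {y : ℝ | R < |y|} :=
  measurable_abs measurableSet_Ioi

lemma integrableOn_abs_le_jpn_rpow (r R : ℝ) :
    IntegrableOn (fun y => jpn y ^ r) {y | |y| ≤ R} :=
  (continuous_jpn_rpow r).integrableOn_Icc.mono_set fun _ hy => abs_le.1 hy

lemma setIntegral_abs_le_jpn_rpow_neg_le {τ s : ℝ} (hs : 0 ≤ s) (h : 1 < τ + s) (R : ℝ) :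
    ∫ y in {y | |y| ≤ R}, jpn y ^ (-τ) ≤ (∫ y, jpn y ^ (-(τ + s))) * jpn R ^ s := by
  have hint := integrable_jpn_rpow_neg h
  have hpt : ∀ y ∈ {y : ℝ | |y| ≤ R}, jpn y ^ (-τ) ≤ jpn y ^ (-(τ + s)) * jpn R ^ s := by
    intro y hy
    calc jpn y ^ (-τ) = jpn y ^ (-(τ + s)) * jpn y ^ s := by
          rw [← rpow_add (jpn_pos y)]; ring_nf
      _ ≤ jpn y ^ (-(τ + s)) * jpn R ^ s :=
          mul_le_mul_of_nonneg_left
            (rpow_le_rpow (jpn_pos y).le (jpn_le_jpn (hy.trans (le_abs_self R))) hs)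
            (jpn_rpow_nonneg _ _)
  calc ∫ y in {y | |y| ≤ R}, jpn y ^ (-τ)
      ≤ ∫ y in {y | |y| ≤ R}, jpn y ^ (-(τ + s)) * jpn R ^ s :=
        setIntegral_mono_on (integrableOn_abs_le_jpn_rpow _ R) (hint.mul_const _).integrableOn
          (measurableSet_abs_le R) hpt
    _ ≤ ∫ y, jpn y ^ (-(τ + s)) * jpn R ^ s :=
        setIntegral_le_integral (hint.mul_const _)
          (Filter.Eventually.of_forall fun y =>
            mul_nonneg (jpn_rpow_nonneg _ _) (jpn_rpow_nonneg _ _))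
    _ = (∫ y, jpn y ^ (-(τ + s))) * jpn R ^ s := integral_mul_const _ _

lemma setIntegral_abs_le_jpn_rpow_neg_le_of_lt_one {τ R : ℝ} (h0 : 0 ≤ τ) (h1 : τ < 1)
    (hR : 0 ≤ R) : ∫ y in {y | |y| ≤ R}, jpn y ^ (-τ) ≤ 2 / (1 - τ) * jpn R ^ (1 - τ) := by
  have heven : ∫ y in {y | |y| ≤ R}, jpn y ^ (-τ) = 2 * ∫ y in Ioc 0 R, jpn y ^ (-τ) := by
    rw [← Ioi_inter_Iic, inter_comm]
    exact setIntegral_preimage_abs (fun y => by rw [jpn_abs]) measurableSet_Iic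
  have hpow : IntegrableOn (fun y : ℝ => y ^ (-τ)) (Ioc 0 R) :=
    (intervalIntegrable_iff_integrableOn_Ioc_of_le hR).1
      (intervalIntegral.intervalIntegrable_rpow' (by linarith))
  have hle : ∫ y in Ioc 0 R, jpn y ^ (-τ) ≤ ∫ y in Ioc 0 R, y ^ (-τ) :=
    setIntegral_mono_on ((continuous_jpn_rpow _).integrableOn_Icc.mono_set Ioc_subset_Icc_self)
      hpow measurableSet_Ioc fun y hy =>
        rpow_le_rpow_of_nonpos hy.1 ((le_abs_self y).trans (abs_le_jpn y)) (by linarith)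
  have hval : ∫ y in Ioc 0 R, y ^ (-τ) = R ^ (1 - τ) / (1 - τ) := by
    rw [← intervalIntegral.integral_of_le hR, integral_rpow (Or.inl (by linarith)),
      zero_rpow (by linarith), sub_zero, neg_add_eq_sub]
  have hR' : R ^ (1 - τ) ≤ jpn R ^ (1 - τ) :=
    rpow_le_rpow hR ((le_abs_self R).trans (abs_le_jpn R)) (by linarith)
  calc ∫ y in {y | |y| ≤ R}, jpn y ^ (-τ) ≤ 2 * (R ^ (1 - τ) / (1 - τ)) := by
        rw [heven, ← hval]; linarith
    _ ≤ 2 / (1 - τ) * jpn R ^ (1 - τ) := by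
        rw [mul_div_assoc', div_mul_eq_mul_div]
        gcongr

lemma setIntegral_lt_abs_jpn_rpow_neg_le {ρ R : ℝ} (hρ : 1 < ρ) (hR : 0 < R) :
    ∫ y in {y | R < |y|}, jpn y ^ (-ρ) ≤ 2 / (ρ - 1) * R ^ (-(ρ - 1)) := by
  have heven : ∫ y in {y | R < |y|}, jpn y ^ (-ρ) = 2 * ∫ y in Ioi R, jpn y ^ (-ρ) := by
    have h := setIntegral_preimage_abs (g := fun y => jpn y ^ (-ρ)) (fun y => by rw [jpn_abs])
      (measurableSet_Ioi (a := R))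
    rwa [Ioi_inter_Ioi, max_eq_left hR.le] at h
  have hle : ∫ y in Ioi R, jpn y ^ (-ρ) ≤ ∫ y in Ioi R, y ^ (-ρ) :=
    setIntegral_mono_on (integrable_jpn_rpow_neg hρ).integrableOn
      (integrableOn_Ioi_rpow_of_lt (by linarith) hR) measurableSet_Ioi fun y hy =>
        rpow_le_rpow_of_nonpos (hR.trans hy) ((le_abs_self y).trans (abs_le_jpn y)) (by linarith)
  have hval : ∫ y in Ioi R, y ^ (-ρ) = R ^ (-(ρ - 1)) / (ρ - 1) := by
    rw [integral_Ioi_rpow_of_lt (by linarith) hR, show -ρ + 1 = -(ρ - 1) by ring, div_neg,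
      neg_div, neg_neg]
  calc ∫ y in {y | R < |y|}, jpn y ^ (-ρ) ≤ 2 * (R ^ (-(ρ - 1)) / (ρ - 1)) := by
        rw [heven, ← hval]; linarith
    _ = 2 / (ρ - 1) * R ^ (-(ρ - 1)) := by ring

lemma exists_setIntegral_abs_le_jpn_rpow_neg_le {τ s : ℝ} (hτ : 0 ≤ τ) (hs : 0 ≤ s)
    (h : 1 < τ + s ∨ τ < 1 ∧ τ + s = 1) :
    ∃ K, 0 ≤ K ∧ ∀ R, 0 ≤ R → ∫ y in {y | |y| ≤ R}, jpn y ^ (-τ) ≤ K * jpn R ^ s := by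
  rcases h with h | ⟨h1, h2⟩
  · exact ⟨_, integral_nonneg fun y => jpn_rpow_nonneg y _,
      fun R _ => setIntegral_abs_le_jpn_rpow_neg_le hs h R⟩
  · obtain rfl : s = 1 - τ := by linarith
    exact ⟨2 / (1 - τ), div_nonneg zero_le_two hs,
      fun R hR => setIntegral_abs_le_jpn_rpow_neg_le_of_lt_one hτ h1 hR⟩

lemma exists_setIntegral_lt_abs_jpn_rpow_neg_le {ρ : ℝ} (hρ : 1 < ρ) :
    ∃ K, 0 ≤ K ∧ ∀ R, 0 ≤ R →
      ∫ y in {y | R < |y|}, jpn y ^ (-ρ) ≤ K * jpn R ^ (-(ρ - 1)) := by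
  set I := ∫ y, jpn y ^ (-ρ)
  have hI : 0 ≤ I := integral_nonneg fun y => jpn_rpow_nonneg y _
  have hK : 0 ≤ 2 / (ρ - 1) + I := add_nonneg (div_nonneg zero_le_two (by linarith)) hI
  refine ⟨2 ^ (ρ - 1) * (2 / (ρ - 1) + I), by positivity, fun R hR => ?_⟩
  have htail : ∫ y in {y | R < |y|}, jpn y ^ (-ρ) ≤ (2 / (ρ - 1) + I) * max R 1 ^ (-(ρ - 1)) := by
    rcases le_or_gt 1 R with h | h
    · rw [max_eq_left h]
      have := setIntegral_lt_abs_jpn_rpow_neg_le hρ (zero_lt_one.trans_le h)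
      nlinarith [rpow_nonneg hR (-(ρ - 1))]
    · rw [max_eq_right h.le, one_rpow, mul_one]
      have := setIntegral_le_integral (s := {y | R < |y|}) (integrable_jpn_rpow_neg hρ)
        (Filter.Eventually.of_forall fun y => jpn_rpow_nonneg y _)
      linarith [div_nonneg zero_le_two (by linarith : (0 : ℝ) ≤ ρ - 1)]
  have hmax : jpn R ≤ 2 * max R 1 := by
    have := jpn_le_one_add_abs R
    rw [abs_of_nonneg hR] at this
    linarith [le_max_left R 1, le_max_right R 1]
  calc ∫ y in {y | R < |y|}, jpn y ^ (-ρ)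
      ≤ (2 / (ρ - 1) + I) * max R 1 ^ (-(ρ - 1)) := htail
    _ ≤ (2 / (ρ - 1) + I) * (2 ^ (ρ - 1) * jpn R ^ (-(ρ - 1))) :=
        mul_le_mul_of_nonneg_left
          (rpow_neg_le_mul_rpow_neg (jpn_pos R) two_pos hmax (by linarith)) hK
    _ = 2 ^ (ρ - 1) * (2 / (ρ - 1) + I) * jpn R ^ (-(ρ - 1)) := by ring

lemma jpn_rpow_neg_mul_le {β γ : ℝ} (hβ : 0 ≤ β) (hγ : 0 ≤ γ) (d y : ℝ) :
    jpn y ^ (-β) * jpn (y + d) ^ (-γ) ≤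
      2 ^ γ * jpn d ^ (-γ) * {z | |z| ≤ |d| / 2}.indicator (fun z => jpn z ^ (-β)) y
      + 2 ^ β * jpn d ^ (-β) * {z | |z| ≤ |d| / 2}.indicator (fun z => jpn z ^ (-γ)) (y + d)
      + 3 ^ β * {z | |d| / 2 < |z|}.indicator (fun z => jpn z ^ (-(β + γ))) (y + d) := by
  have htri : |d| ≤ |y + d| + |y| := by simpa using abs_sub (y + d) y
  have h₁ : 0 ≤ 2 ^ γ * jpn d ^ (-γ) *
      {z | |z| ≤ |d| / 2}.indicator (fun z => jpn z ^ (-β)) y :=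
    mul_nonneg (mul_nonneg (by positivity) (jpn_rpow_nonneg _ _))
      (indicator_nonneg (fun z _ => jpn_rpow_nonneg z _) y)
  have h₂ : 0 ≤ 2 ^ β * jpn d ^ (-β) *
      {z | |z| ≤ |d| / 2}.indicator (fun z => jpn z ^ (-γ)) (y + d) :=
    mul_nonneg (mul_nonneg (by positivity) (jpn_rpow_nonneg _ _))
      (indicator_nonneg (fun z _ => jpn_rpow_nonneg z _) _)
  have h₃ : 0 ≤ 3 ^ β * {z | |d| / 2 < |z|}.indicator (fun z => jpn z ^ (-(β + γ))) (y + d) :=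
    mul_nonneg (by positivity) (indicator_nonneg (fun z _ => jpn_rpow_nonneg z _) _)
  by_cases hy : |y| ≤ |d| / 2
  · rw [indicator_of_mem (show y ∈ {z | |z| ≤ |d| / 2} from hy)] at h₁ ⊢
    have := jpn_rpow_neg_le (c := 2) one_le_two (by linarith : |d| ≤ 2 * |y + d|) hγ
    have key : jpn y ^ (-β) * jpn (y + d) ^ (-γ) ≤ 2 ^ γ * jpn d ^ (-γ) * jpn y ^ (-β) := by
      rw [mul_comm]; exact mul_le_mul_of_nonneg_right this (jpn_rpow_nonneg _ _)
    linarith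
  by_cases hyd : |y + d| ≤ |d| / 2
  · rw [indicator_of_mem (show y + d ∈ {z | |z| ≤ |d| / 2} from hyd)] at h₂ ⊢
    have := jpn_rpow_neg_le (c := 2) one_le_two (by linarith : |d| ≤ 2 * |y|) hβ
    linarith [mul_le_mul_of_nonneg_right this (jpn_rpow_nonneg (y + d) (-γ))]
  · rw [indicator_of_mem (show y + d ∈ {z | |d| / 2 < |z|} from not_le.1 hyd)] at h₃ ⊢
    have h3 : |y + d| ≤ 3 * |y| := by linarith [abs_add_le y d]
    have := jpn_rpow_neg_le (c := 3) (by norm_num) h3 hβ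
    have hsplit : jpn (y + d) ^ (-(β + γ)) = jpn (y + d) ^ (-β) * jpn (y + d) ^ (-γ) := by
      rw [← rpow_add (jpn_pos _), neg_add]
    have key : jpn y ^ (-β) * jpn (y + d) ^ (-γ) ≤ 3 ^ β * jpn (y + d) ^ (-(β + γ)) := by
      rw [hsplit, ← mul_assoc]; exact mul_le_mul_of_nonneg_right this (jpn_rpow_nonneg _ _)
    linarith

lemma integral_jpn_rpow_neg_mul_le {β γ : ℝ} (hβ : 0 ≤ β) (hγ : 0 ≤ γ) (hsum : 1 < β + γ)
    (d : ℝ) :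
    ∫ y, jpn y ^ (-β) * jpn (y + d) ^ (-γ) ≤
      2 ^ γ * jpn d ^ (-γ) * (∫ y in {y | |y| ≤ |d| / 2}, jpn y ^ (-β))
      + 2 ^ β * jpn d ^ (-β) * (∫ y in {y | |y| ≤ |d| / 2}, jpn y ^ (-γ))
      + 3 ^ β * ∫ y in {y | |d| / 2 < |y|}, jpn y ^ (-(β + γ)) := by
  have hW : ∀ τ : ℝ, Integrable ({z | |z| ≤ |d| / 2}.indicator (fun z => jpn z ^ (-τ))) :=
    fun τ =>
      (integrable_indicator_iff (measurableSet_abs_le _)).2 (integrableOn_abs_le_jpn_rpow _ _)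
  have hT : Integrable ({z | |d| / 2 < |z|}.indicator (fun z => jpn z ^ (-(β + γ)))) :=
    (integrable_indicator_iff (measurableSet_lt_abs _)).2
      (integrable_jpn_rpow_neg hsum).integrableOn
  have h₁ := (hW β).const_mul (2 ^ γ * jpn d ^ (-γ))
  have h₂ := ((hW γ).comp_add_right d).const_mul (2 ^ β * jpn d ^ (-β))
  have h₃ := (hT.comp_add_right d).const_mul (3 ^ β)
  refine (integral_mono_of_nonneg (Filter.Eventually.of_forall fun y =>
      mul_nonneg (jpn_rpow_nonneg _ _) (jpn_rpow_nonneg _ _)) ((h₁.add h₂).add h₃)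
    (Filter.Eventually.of_forall (jpn_rpow_neg_mul_le hβ hγ d))).trans_eq ?_
  rw [integral_add' (h₁.add h₂) h₃, integral_add' h₁ h₂, integral_const_mul, integral_const_mul,
    integral_const_mul, integral_add_right_eq_self (fun y => {z | |z| ≤ |d| / 2}.indicator _ y),
    integral_add_right_eq_self (fun y => {z | |d| / 2 < |z|}.indicator _ y),
    integral_indicator (measurableSet_abs_le _), integral_indicator (measurableSet_abs_le _),
    integral_indicator (measurableSet_lt_abs _)]

theorem exists_integral_jpn_rpow_neg_mul_le {β γ α : ℝ} (hγ : 0 ≤ γ) (hβγ : γ ≤ β)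
    (hsum : 1 < β + γ) (hαγ : α ≤ γ) (hα : α < β + γ - 1 ∨ β < 1 ∧ α = β + γ - 1) :
    ∃ C, ∀ d, ∫ y, jpn y ^ (-β) * jpn (y + d) ^ (-γ) ≤ C * jpn d ^ (-α) := by
  have hβ : 0 ≤ β := hγ.trans hβγ
  obtain ⟨K₁, hK₁, hW₁⟩ := exists_setIntegral_abs_le_jpn_rpow_neg_le (s := γ - α) hβ
    (by linarith) (hα.imp (fun _ => by linarith) fun h => ⟨h.1, by linarith [h.2]⟩)
  obtain ⟨K₂, hK₂, hW₂⟩ := exists_setIntegral_abs_le_jpn_rpow_neg_le (s := β - α) hγ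
    (by linarith) (hα.imp (fun _ => by linarith) fun h => ⟨by linarith [h.1], by linarith [h.2]⟩)
  obtain ⟨K₃, hK₃, hT⟩ := exists_setIntegral_lt_abs_jpn_rpow_neg_le hsum
  refine ⟨2 ^ γ * K₁ + 2 ^ β * K₂ + 3 ^ β * (2 ^ (β + γ - 1) * K₃), fun d => ?_⟩
  have hR : 0 ≤ |d| / 2 := by positivity
  have hD : 0 < jpn d := jpn_pos d
  have hRD : jpn (|d| / 2) ≤ jpn d := jpn_le_jpn (by rw [abs_of_nonneg hR]; linarith [abs_nonneg d])
  have hDR : jpn d ≤ 2 * jpn (|d| / 2) :=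
    jpn_le_mul_of_abs_le_mul one_le_two (by rw [abs_of_nonneg hR]; linarith)
  have hW₁' := (hW₁ _ hR).trans
    (mul_le_mul_of_nonneg_left (rpow_le_rpow (jpn_pos _).le hRD (by linarith)) hK₁)
  have hW₂' := (hW₂ _ hR).trans
    (mul_le_mul_of_nonneg_left (rpow_le_rpow (jpn_pos _).le hRD (by linarith)) hK₂)
  have hT' : ∫ y in {y | |d| / 2 < |y|}, jpn y ^ (-(β + γ)) ≤ 2 ^ (β + γ - 1) * K₃ * jpn d ^ (-α) :=
    calc _ ≤ K₃ * jpn (|d| / 2) ^ (-(β + γ - 1)) := hT _ hR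
      _ ≤ K₃ * (2 ^ (β + γ - 1) * jpn d ^ (-(β + γ - 1))) := by
          gcongr
          exact rpow_neg_le_mul_rpow_neg hD two_pos hDR (by linarith)
      _ ≤ K₃ * (2 ^ (β + γ - 1) * jpn d ^ (-α)) := by
          gcongr
          · exact one_le_jpn d
          · rcases hα with h | ⟨_, h⟩ <;> linarith
      _ = 2 ^ (β + γ - 1) * K₃ * jpn d ^ (-α) := by ring
  have hsplit : ∀ t, jpn d ^ (-t) * jpn d ^ (t - α) = jpn d ^ (-α) := fun t => by
    rw [← rpow_add hD]; congr 1; ring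
  calc ∫ y, jpn y ^ (-β) * jpn (y + d) ^ (-γ)
      ≤ 2 ^ γ * jpn d ^ (-γ) * (K₁ * jpn d ^ (γ - α))
        + 2 ^ β * jpn d ^ (-β) * (K₂ * jpn d ^ (β - α))
        + 3 ^ β * (2 ^ (β + γ - 1) * K₃ * jpn d ^ (-α)) :=
        (integral_jpn_rpow_neg_mul_le hβ hγ hsum d).trans (by gcongr)
    _ = (2 ^ γ * K₁ + 2 ^ β * K₂ + 3 ^ β * (2 ^ (β + γ - 1) * K₃)) * jpn d ^ (-α) := by
        linear_combination (2 ^ γ * K₁) * hsplit γ + (2 ^ β * K₂) * hsplit β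

/-- Convolution-type estimate for Japanese bracket weights (integral form). -/
theorem convolution_bracket_integral (β γ ε : ℝ) (hγ : 0 ≤ γ) (hβγ : γ ≤ β)
    (hsum : 1 < β + γ) (hε : 0 < ε) :
    ∃ C : ℝ, 0 < C ∧ ∀ a₁ a₂ : ℝ,
      (∫ x : ℝ, jpn (x - a₁) ^ (-β) * jpn (x - a₂) ^ (-γ))
        ≤ C * jpn (a₁ - a₂) ^
            (-(if 1 < β then γ else if β = 1 then γ - ε else β + γ - 1)) := by
  obtain ⟨C, hC⟩ := exists_integral_jpn_rpow_neg_mul_le hγ hβγ hsum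
    (α := if 1 < β then γ else if β = 1 then γ - ε else β + γ - 1)
    (by split_ifs with h₁ h₂ <;> [exact le_rfl; linarith; linarith [not_lt.1 h₁]])
    (by
      split_ifs with h₁ h₂
      · exact Or.inl (by linarith)
      · exact Or.inl (by linarith)
      · exact Or.inr ⟨lt_of_le_of_ne (not_lt.1 h₁) h₂, rfl⟩)
  refine ⟨max C 1, lt_max_of_lt_right one_pos, fun a₁ a₂ => ?_⟩
  rw [integral_comp_sub_mul_comp_sub (fun y => jpn y ^ (-β)) (fun y => jpn y ^ (-γ))]
  exact (hC _).trans (mul_le_mul_of_nonneg_right (le_max_left _ _) (jpn_rpow_nonneg _ _))
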